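/- Let Ĩ, J be random variables on finite sets with I(Ĩ;J) < β, and α ∈ (0,1). Then there exists a random variable I on ℐ jointly distributed with (Ĩ, J) such that I − Ĩ − J is a Markov chain, P(I ≠ Ĩ) ≤ α, P_I = P_{Ĩ}, I(I;J) < β, and D(P_I ⊗ P_J ‖ P_{I,J}) ≤ √(2β)·log(1/α). -/

import Mathlib

/-!
Let `I` be `Ĩ` with probability `1 - α` and an independent fresh sample of `P_Ĩ` otherwise.
Then `P_{I,J} = (1 - α) P_{Ĩ,J} + α P_Ĩ ⊗ P_J` has the same marginals as `P_{Ĩ,J}`, so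
convexity of `t ↦ t log t` gives `I(I;J) ≤ (1 - α) I(Ĩ;J)`. For the reverse divergence, the
pointwise bound `q log (q / ((1 - α) p + α q)) ≤ (q - p)⁺ log (1/α)` (concavity of `log`)
bounds `D(P_Ĩ ⊗ P_J ‖ P_{I,J})` by the total variation distance between `P_{Ĩ,J}` and
`P_Ĩ ⊗ P_J` times `log (1/α)`, and that distance is at most `√(ln 2 · I(Ĩ;J)) ≤ √(2β)`, by
comparison with the Hellinger distance and Cauchy–Schwarz.
-/

open Finset

section
variable {I J : Type*} [Fintype I] [Fintype J] [DecidableEq I]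

noncomputable def margI (p : I × J → ℝ) : I → ℝ := fun i => ∑ j, p (i, j)

noncomputable def margJ (p : I × J → ℝ) : J → ℝ := fun j => ∑ i, p (i, j)

open Classical in
/-- Kullback–Leibler divergence (base 2), summed over the support of the first argument. -/
noncomputable def KL {X : Type*} [Fintype X] (P Q : X → ℝ) : ℝ :=
  ∑ x, if 0 < P x then P x * Real.logb 2 (P x / Q x) else 0

/-- Mutual information `I(Ĩ;J) = D(P_{Ĩ,J} ‖ P_{Ĩ}⊗P_J)` (base-2 logarithms). -/
noncomputable def mutInfo (p : I × J → ℝ) : ℝ :=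
  KL p (fun x => margI p x.1 * margJ p x.2)

end

section KL

open Real

theorem mul_log_mix_div_le {α a c : ℝ} (hα0 : 0 ≤ α) (hα1 : α ≤ 1) (ha : 0 ≤ a) (hc : 0 < c) :
    ((1 - α) * a + α * c) * log (((1 - α) * a + α * c) / c) ≤ (1 - α) * (a * log (a / c)) := by
  have hmix : (1 - α) * (a / c) + α * 1 = ((1 - α) * a + α * c) / c := by field_simp
  have key := convexOn_mul_log.2 (Set.mem_Ici.2 (div_nonneg ha hc.le)) (Set.mem_Ici.2 zero_le_one)
    (sub_nonneg.2 hα1) hα0 (sub_add_cancel 1 α)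
  simp only [smul_eq_mul, log_one, mul_zero, add_zero, hmix] at key
  calc ((1 - α) * a + α * c) * log (((1 - α) * a + α * c) / c)
      = c * (((1 - α) * a + α * c) / c * log (((1 - α) * a + α * c) / c)) := by field_simp
    _ ≤ c * ((1 - α) * (a / c * log (a / c))) := mul_le_mul_of_nonneg_left key hc.le
    _ = (1 - α) * (a * log (a / c)) := by field_simp

theorem sq_sqrt_sub_sqrt_le {a b : ℝ} (ha : 0 ≤ a) (hb : 0 < b) :
    (√a - √b) ^ 2 ≤ a * log (a / b) - a + b := by
  rcases ha.eq_or_lt with rfl | ha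
  · simp [sq_sqrt hb.le]
  have hs : 0 < √a := sqrt_pos.2 ha
  have ht : 0 < √b := sqrt_pos.2 hb
  have hlog : log (a / b) = 2 * log (√a / √b) := by
    rw [← log_rpow (by positivity), div_rpow (by positivity) (by positivity)]
    norm_num [sq_sqrt ha.le, sq_sqrt hb.le]
  have h := one_sub_inv_le_log_of_pos (div_pos hs ht)
  rw [inv_div] at h
  have h' : a - √a * √b ≤ a * log (√a / √b) := by
    calc a - √a * √b = a * (1 - √b / √a) := by
          field_simp; linear_combination (-√b) * sq_sqrt ha.le
      _ ≤ _ := mul_le_mul_of_nonneg_left h ha.le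
  nlinarith [sq_sqrt ha.le, sq_sqrt hb.le]

theorem mul_log_div_mix_le {α a q : ℝ} (hα0 : 0 < α) (hα1 : α ≤ 1) (ha : 0 ≤ a) (hq : 0 < q) :
    q * log (q / ((1 - α) * a + α * q)) ≤ max (q - a) 0 * log (1 / α) := by
  have hm : 0 < (1 - α) * a + α * q := by nlinarith
  rcases le_or_gt q a with hqa | haq
  · rw [max_eq_right (by linarith), zero_mul]
    refine mul_nonpos_of_nonneg_of_nonpos hq.le (log_nonpos (by positivity) ?_)
    rw [div_le_one hm]; nlinarith
  rw [max_eq_left (by linarith)]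
  have hr0 : 0 ≤ a / q := div_nonneg ha hq.le
  have hr1 : a / q ≤ 1 := (div_le_one hq).2 haq.le
  -- `(1 - α) a + α q = q ((1 - r) α + r)` with `r = a / q`, and `log` is concave
  have key := strictConcaveOn_log_Ioi.concaveOn.2 (Set.mem_Ioi.2 hα0) (Set.mem_Ioi.2 one_pos)
    (sub_nonneg.2 hr1) hr0 (sub_add_cancel 1 (a / q))
  have hmix : (1 - a / q) * α + a / q * 1 = ((1 - α) * a + α * q) / q := by field_simp; ring
  simp only [smul_eq_mul, log_one, mul_zero, add_zero, hmix] at key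
  rw [log_div hq.ne' hm.ne', one_div, log_inv]
  rw [log_div hm.ne' hq.ne'] at key
  have hq' : q * (1 - a / q) = q - a := by field_simp
  have := mul_le_mul_of_nonneg_left key hq.le
  rw [← mul_assoc, hq'] at this
  linarith

variable {X : Type*} [Fintype X] {P Q : X → ℝ} {α : ℝ}

theorem KL_eq_sum_mul_log_div (hP : ∀ x, 0 ≤ P x) (Q : X → ℝ) :
    KL P Q = (∑ x, P x * log (P x / Q x)) / log 2 := by
  unfold KL
  rw [sum_div]
  refine sum_congr rfl fun x _ => ?_
  rcases (hP x).eq_or_lt with h | h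
  · simp [← h]
  · rw [if_pos h, logb, mul_div_assoc]

theorem KL_mix_le (hP : ∀ x, 0 ≤ P x) (hQ : ∀ x, 0 < Q x) (hα0 : 0 ≤ α) (hα1 : α ≤ 1) :
    KL (fun x => (1 - α) * P x + α * Q x) Q ≤ (1 - α) * KL P Q := by
  have hmix : ∀ x, 0 ≤ (1 - α) * P x + α * Q x := fun x =>
    add_nonneg (mul_nonneg (sub_nonneg.2 hα1) (hP x)) (mul_nonneg hα0 (hQ x).le)
  rw [KL_eq_sum_mul_log_div hmix, KL_eq_sum_mul_log_div hP, ← mul_div_assoc, mul_sum]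
  exact div_le_div_of_nonneg_right
    (sum_le_sum fun x _ => mul_log_mix_div_le hα0 hα1 (hP x) (hQ x)) (log_pos one_lt_two).le

theorem sum_sq_sqrt_sub_sqrt_le_log_two_mul_KL (hP : ∀ x, 0 ≤ P x) (hQ : ∀ x, 0 < Q x)
    (hPQ : ∑ x, P x = ∑ x, Q x) :
    ∑ x, (√(P x) - √(Q x)) ^ 2 ≤ log 2 * KL P Q := by
  calc ∑ x, (√(P x) - √(Q x)) ^ 2 ≤ ∑ x, (P x * log (P x / Q x) - P x + Q x) :=
        sum_le_sum fun x _ => sq_sqrt_sub_sqrt_le (hP x) (hQ x)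
    _ = ∑ x, P x * log (P x / Q x) := by
        rw [sum_add_distrib, sum_sub_distrib, hPQ, sub_add_cancel]
    _ = log 2 * KL P Q := by
        rw [KL_eq_sum_mul_log_div hP, mul_div_cancel₀ _ (log_pos one_lt_two).ne']

theorem KL_nonneg (hP : ∀ x, 0 ≤ P x) (hQ : ∀ x, 0 < Q x) (hPQ : ∑ x, P x = ∑ x, Q x) :
    0 ≤ KL P Q :=
  nonneg_of_mul_nonneg_right
    ((sum_nonneg fun _ _ => sq_nonneg _).trans (sum_sq_sqrt_sub_sqrt_le_log_two_mul_KL hP hQ hPQ))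
    (log_pos one_lt_two)

theorem sq_sum_abs_sub_le (hP : ∀ x, 0 ≤ P x) (hQ : ∀ x, 0 ≤ Q x) :
    (∑ x, |P x - Q x|) ^ 2 ≤ 2 * (∑ x, P x + ∑ x, Q x) * ∑ x, (√(P x) - √(Q x)) ^ 2 := by
  have hfactor : ∀ x, |P x - Q x| = |√(P x) - √(Q x)| * (√(P x) + √(Q x)) := fun x => by
    rw [← abs_of_nonneg (by positivity : 0 ≤ √(P x) + √(Q x)), ← abs_mul]
    congr 1
    linear_combination (sq_sqrt (hQ x)) - (sq_sqrt (hP x))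
  have hplus : ∑ x, (√(P x) + √(Q x)) ^ 2 ≤ 2 * (∑ x, P x + ∑ x, Q x) := by
    rw [mul_add, mul_sum, mul_sum, ← sum_add_distrib]
    refine sum_le_sum fun x _ => ?_
    nlinarith [sq_sqrt (hP x), sq_sqrt (hQ x), sq_nonneg (√(P x) - √(Q x))]
  calc (∑ x, |P x - Q x|) ^ 2
      ≤ (∑ x, (√(P x) - √(Q x)) ^ 2) * ∑ x, (√(P x) + √(Q x)) ^ 2 := by
        simpa only [hfactor, sq_abs] using sum_mul_sq_le_sq_mul_sq univ
          (fun x => |√(P x) - √(Q x)|) (fun x => √(P x) + √(Q x))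
    _ ≤ _ := by
        rw [mul_comm _ (∑ x, _)]
        exact mul_le_mul_of_nonneg_right hplus (sum_nonneg fun _ _ => sq_nonneg _)

theorem sum_max_sub_eq_half_sum_abs (hPQ : ∑ x, P x = ∑ x, Q x) :
    ∑ x, max (Q x - P x) 0 = (∑ x, |P x - Q x|) / 2 := by
  have hpt : ∀ x, max (Q x - P x) 0 = (|P x - Q x| + (Q x - P x)) / 2 := fun x => by
    rcases le_total (P x) (Q x) with h | h
    · rw [max_eq_left (by linarith), abs_of_nonpos (by linarith)]; ring
    · rw [max_eq_right (by linarith), abs_of_nonneg (by linarith)]; ring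
  rw [sum_congr rfl fun x _ => hpt x, ← sum_div, sum_add_distrib, sum_sub_distrib, hPQ,
    sub_self, add_zero]

theorem sum_max_sub_le_sqrt_KL (hP : ∀ x, 0 ≤ P x) (hQ : ∀ x, 0 < Q x)
    (hP1 : ∑ x, P x = 1) (hQ1 : ∑ x, Q x = 1) :
    ∑ x, max (Q x - P x) 0 ≤ √(log 2 * KL P Q) := by
  have hPQ : ∑ x, P x = ∑ x, Q x := hP1.trans hQ1.symm
  have hhel := sum_sq_sqrt_sub_sqrt_le_log_two_mul_KL hP hQ hPQ
  have htv := sq_sum_abs_sub_le hP fun x => (hQ x).le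
  rw [hP1, hQ1] at htv
  rw [le_sqrt (sum_nonneg fun _ _ => le_max_right _ _)
    ((sum_nonneg fun _ _ => sq_nonneg _).trans hhel), sum_max_sub_eq_half_sum_abs hPQ]
  nlinarith

theorem KL_le_sum_max_sub_mul_logb (hP : ∀ x, 0 ≤ P x) (hQ : ∀ x, 0 < Q x)
    (hα0 : 0 < α) (hα1 : α ≤ 1) :
    KL Q (fun x => (1 - α) * P x + α * Q x) ≤ (∑ x, max (Q x - P x) 0) * logb 2 (1 / α) := by
  rw [KL_eq_sum_mul_log_div fun x => (hQ x).le, logb, ← mul_div_assoc, sum_mul]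
  exact div_le_div_of_nonneg_right
    (sum_le_sum fun x _ => mul_log_div_mix_le hα0 hα1 (hP x) (hQ x)) (log_pos one_lt_two).le

end KL

section Joint

variable {I J : Type*} [Fintype I] [Fintype J] {α : ℝ} {p : I × J → ℝ}

noncomputable def margProd (p : I × J → ℝ) : I × J → ℝ := fun x => margI p x.1 * margJ p x.2

theorem sum_margI (p : I × J → ℝ) : ∑ i, margI p i = ∑ x, p x :=
  (Fintype.sum_prod_type p).symm

theorem sum_margJ (p : I × J → ℝ) : ∑ j, margJ p j = ∑ x, p x := by
  rw [Fintype.sum_prod_type, sum_comm]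
  rfl

theorem margProd_pos (hI : ∀ i, 0 < margI p i) (hJ : ∀ j, 0 < margJ p j) (x : I × J) :
    0 < margProd p x :=
  mul_pos (hI x.1) (hJ x.2)

theorem sum_margProd (hp1 : ∑ x, p x = 1) : ∑ x, margProd p x = 1 := by
  rw [Fintype.sum_prod_type]
  simp only [margProd, ← mul_sum, ← sum_mul, sum_margI, sum_margJ, hp1, one_mul]

theorem margI_mix_margProd (hp1 : ∑ x, p x = 1) :
    margI (fun x => (1 - α) * p x + α * margProd p x) = margI p := by
  funext i
  simp only [margI, margProd, sum_add_distrib, ← mul_sum, sum_margJ, hp1]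
  ring

theorem margJ_mix_margProd (hp1 : ∑ x, p x = 1) :
    margJ (fun x => (1 - α) * p x + α * margProd p x) = margJ p := by
  funext j
  simp only [margJ, margProd, sum_add_distrib, ← mul_sum, ← sum_mul, sum_margI, hp1]
  ring

theorem mutInfo_mix_margProd_le (hp0 : ∀ x, 0 ≤ p x) (hp1 : ∑ x, p x = 1)
    (hI : ∀ i, 0 < margI p i) (hJ : ∀ j, 0 < margJ p j) (hα0 : 0 ≤ α) (hα1 : α ≤ 1) :
    mutInfo (fun x => (1 - α) * p x + α * margProd p x) ≤ (1 - α) * mutInfo p := by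
  unfold mutInfo
  rw [margI_mix_margProd hp1, margJ_mix_margProd hp1]
  exact KL_mix_le hp0 (margProd_pos hI hJ) hα0 hα1

theorem mutInfo_nonneg (hp0 : ∀ x, 0 ≤ p x) (hp1 : ∑ x, p x = 1)
    (hI : ∀ i, 0 < margI p i) (hJ : ∀ j, 0 < margJ p j) : 0 ≤ mutInfo p :=
  KL_nonneg hp0 (margProd_pos hI hJ) (hp1.trans (sum_margProd hp1).symm)

end Joint

section Resample

variable {I : Type*} [DecidableEq I] {α : ℝ} {μ : I → ℝ}

/-- `P(I = i | Ĩ = i')`. -/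
noncomputable def resample (α : ℝ) (μ : I → ℝ) (i i' : I) : ℝ :=
  (if i = i' then 1 - α else 0) + α * μ i

theorem resample_nonneg (hα0 : 0 ≤ α) (hα1 : α ≤ 1) (hμ : ∀ i, 0 ≤ μ i) (i i' : I) :
    0 ≤ resample α μ i i' :=
  add_nonneg (by split_ifs <;> linarith) (mul_nonneg hα0 (hμ i))

theorem resample_of_ne {i i' : I} (h : i ≠ i') : resample α μ i i' = α * μ i := by
  simp [resample, h]

theorem sum_resample_left [Fintype I] (hμ : ∑ i, μ i = 1) (i' : I) :
    ∑ i, resample α μ i i' = 1 := by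
  simp [resample, sum_add_distrib, ← mul_sum, hμ]

theorem sum_resample_mul [Fintype I] (f : I → ℝ) (i : I) :
    ∑ i', resample α μ i i' * f i' = (1 - α) * f i + α * μ i * ∑ i', f i' := by
  simp only [resample, add_mul, sum_add_distrib, ite_mul, zero_mul, sum_ite_eq, mem_univ,
    if_true, mul_sum]

end Resample

section FakeJoint

variable {I J : Type*} [Fintype J] [DecidableEq I] {α : ℝ} {p : I × J → ℝ}

noncomputable def fakeJoint (α : ℝ) (p : I × J → ℝ) : I × I × J → ℝ :=
  fun x => resample α (margI p) x.1 x.2.1 * p x.2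

theorem fakeJoint_nonneg (hp0 : ∀ x, 0 ≤ p x) (hα0 : 0 ≤ α) (hα1 : α ≤ 1) (x : I × I × J) :
    0 ≤ fakeJoint α p x :=
  mul_nonneg (resample_nonneg hα0 hα1 (fun i => sum_nonneg fun j _ => hp0 (i, j)) _ _) (hp0 _)

theorem sum_fakeJoint_thd (i i' : I) :
    ∑ j, fakeJoint α p (i, i', j) = resample α (margI p) i i' * margI p i' := by
  simp only [fakeJoint, margI, mul_sum]

theorem fakeJoint_markov (i i' : I) (j : J) :
    fakeJoint α p (i, i', j) * margI p i' = (∑ j', fakeJoint α p (i, i', j')) * p (i', j) := by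
  rw [sum_fakeJoint_thd, fakeJoint]
  ring

variable [Fintype I]

theorem sum_fakeJoint_fst (hp1 : ∑ x, p x = 1) (i' : I) (j : J) :
    ∑ i, fakeJoint α p (i, i', j) = p (i', j) := by
  simp only [fakeJoint, ← sum_mul, sum_resample_left ((sum_margI p).trans hp1), one_mul]

theorem sum_fakeJoint (hp1 : ∑ x, p x = 1) : ∑ x, fakeJoint α p x = 1 := by
  rw [Fintype.sum_prod_type, sum_comm, ← hp1]
  exact sum_congr rfl fun y _ => sum_fakeJoint_fst hp1 y.1 y.2

theorem sum_fakeJoint_ne_le (hp0 : ∀ x, 0 ≤ p x) (hp1 : ∑ x, p x = 1) (hα0 : 0 ≤ α) :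
    ∑ x : I × I × J, (if x.1 = x.2.1 then 0 else fakeJoint α p x) ≤ α := by
  have hle : ∀ x : I × I × J,
      (if x.1 = x.2.1 then 0 else fakeJoint α p x) ≤ α * margI p x.1 * p x.2 := fun x => by
    split_ifs with h
    · exact mul_nonneg (mul_nonneg hα0 (sum_nonneg fun _ _ => hp0 _)) (hp0 _)
    · rw [fakeJoint, resample_of_ne h]
  calc _ ≤ ∑ x : I × I × J, α * margI p x.1 * p x.2 := sum_le_sum fun x _ => hle x
    _ = α := by
      rw [Fintype.sum_prod_type]
      simp only [← mul_sum, hp1, mul_one, sum_margI]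

theorem sum_fakeJoint_snd_thd (hp1 : ∑ x, p x = 1) (i : I) :
    ∑ i', ∑ j, fakeJoint α p (i, i', j) = margI p i := by
  simp only [sum_fakeJoint_thd, sum_resample_mul, sum_margI, hp1]
  ring

theorem sum_fakeJoint_snd :
    (fun ij : I × J => ∑ i', fakeJoint α p (ij.1, i', ij.2)) =
      fun x => (1 - α) * p x + α * margProd p x := by
  funext ij
  simp only [fakeJoint, sum_resample_mul, margProd, margJ]
  ring

end FakeJoint

section
variable {I J : Type*} [Fintype I] [Fintype J] [DecidableEq I]

theorem exists_faking_variable_general (p : I × J → ℝ)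
    (hp : (∀ x, 0 ≤ p x) ∧ ∑ x, p x = 1)
    (hIpos : ∀ i, 0 < margI p i) (hJpos : ∀ j, 0 < margJ p j)
    (β : ℝ) (hmi : mutInfo p < β)
    (α : ℝ) (hα : α ∈ Set.Ioo (0 : ℝ) 1) :
    ∃ T : I × I × J → ℝ,
      (∀ x, 0 ≤ T x) ∧ (∑ x, T x = 1) ∧
      -- the `(Ĩ, J)`-marginal of `T` is `p`
      (∀ i' j, ∑ i, T (i, i', j) = p (i', j)) ∧
      -- Markov chain `I − Ĩ − J`
      (∀ i i' j, T (i, i', j) * margI p i' = (∑ j', T (i, i', j')) * p (i', j)) ∧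
      -- `P(I ≠ Ĩ) ≤ α`
      (∑ x : I × I × J, (if x.1 = x.2.1 then 0 else T x)) ≤ α ∧
      -- `P_I = P_Ĩ`
      (∀ i, (∑ i', ∑ j, T (i, i', j)) = margI p i) ∧
      -- `I(I;J) < β`
      mutInfo (fun ij : I × J => ∑ i', T (ij.1, i', ij.2)) < β ∧
      -- `D(P_I ⊗ P_J ‖ P_{I,J}) ≤ √(2β)·log(1/α)`
      KL (fun ij : I × J => (∑ i', ∑ j, T (ij.1, i', j)) * margJ p ij.2)
          (fun ij : I × J => ∑ i', T (ij.1, i', ij.2))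
        ≤ Real.sqrt (2 * β) * Real.logb 2 (1 / α) := by
  obtain ⟨hp0, hp1⟩ := hp
  obtain ⟨hα0, hα1⟩ := hα
  have hq := margProd_pos hIpos hJpos
  have hmi0 := mutInfo_nonneg hp0 hp1 hIpos hJpos
  have hPI : (fun ij : I × J => (∑ i', ∑ j, fakeJoint α p (ij.1, i', j)) * margJ p ij.2) =
      margProd p := funext fun ij => by rw [sum_fakeJoint_snd_thd hp1]; rfl
  have hlogα : 0 ≤ Real.logb 2 (1 / α) := Real.logb_nonneg one_lt_two (one_le_one_div hα0 hα1.le)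
  refine ⟨fakeJoint α p, fakeJoint_nonneg hp0 hα0.le hα1.le, sum_fakeJoint hp1,
    sum_fakeJoint_fst hp1, fakeJoint_markov, sum_fakeJoint_ne_le hp0 hp1 hα0.le,
    sum_fakeJoint_snd_thd hp1, ?_, ?_⟩
  · rw [sum_fakeJoint_snd]
    nlinarith [mutInfo_mix_margProd_le hp0 hp1 hIpos hJpos hα0.le hα1.le]
  · rw [hPI, sum_fakeJoint_snd]
    calc _ ≤ (∑ x, max (margProd p x - p x) 0) * Real.logb 2 (1 / α) :=
          KL_le_sum_max_sub_mul_logb hp0 hq hα0 hα1.le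
      _ ≤ √(Real.log 2 * mutInfo p) * Real.logb 2 (1 / α) := by
          gcongr
          exact sum_max_sub_le_sqrt_KL hp0 hq hp1 (sum_margProd hp1)
      _ ≤ √(2 * β) * Real.logb 2 (1 / α) := by
          gcongr
          nlinarith [Real.log_two_lt_d9]

/-- Lemma 6 of the paper: if `I(Ĩ;J) < β` and `α ∈ (0,1)`, there is a joint
distribution `T` of `(I, Ĩ, J)` extending `P_{Ĩ,J}` such that `I − Ĩ − J` is a Markov
chain, `P(I ≠ Ĩ) ≤ α`, `P_I = P_{Ĩ}`, `I(I;J) < β`, and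
`D(P_I ⊗ P_J ‖ P_{I,J}) ≤ √(2β)·log(1/α)`. -/
theorem exists_faking_variable (p : I × J → ℝ)
    (hp : (∀ x, 0 ≤ p x) ∧ ∑ x, p x = 1)
    (hIpos : ∀ i, 0 < margI p i) (hJpos : ∀ j, 0 < margJ p j)
    (β : ℝ) (hβ : 0 < β) (hmi : mutInfo p < β)
    (α : ℝ) (hα : α ∈ Set.Ioo (0 : ℝ) 1) :
    ∃ T : I × I × J → ℝ,
      (∀ x, 0 ≤ T x) ∧ (∑ x, T x = 1) ∧
      -- the `(Ĩ, J)`-marginal of `T` is `p`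
      (∀ i' j, ∑ i, T (i, i', j) = p (i', j)) ∧
      -- Markov chain `I − Ĩ − J`
      (∀ i i' j, T (i, i', j) * margI p i' = (∑ j', T (i, i', j')) * p (i', j)) ∧
      -- `P(I ≠ Ĩ) ≤ α`
      (∑ x : I × I × J, (if x.1 = x.2.1 then 0 else T x)) ≤ α ∧
      -- `P_I = P_Ĩ`
      (∀ i, (∑ i', ∑ j, T (i, i', j)) = margI p i) ∧
      -- `I(I;J) < β`
      mutInfo (fun ij : I × J => ∑ i', T (ij.1, i', ij.2)) < β ∧
      -- `D(P_I ⊗ P_J ‖ P_{I,J}) ≤ √(2β)·log(1/α)`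
      KL (fun ij : I × J => (∑ i', ∑ j, T (ij.1, i', j)) * margJ p ij.2)
          (fun ij : I × J => ∑ i', T (ij.1, i', ij.2))
        ≤ Real.sqrt (2 * β) * Real.logb 2 (1 / α) :=
  exists_faking_variable_general p hp hIpos hJpos β hmi α hα

end
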